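/- arXiv:1907.11601 — 4 statements merged into one kernel-verified Lean document; each statement's English description precedes it below -/
import Mathlib

section
/- Let f : ℝ^ℓ × ℝ^m → ℝ^ℓ be C¹, Λ : ℝ → ℝ^m a C¹ parameter shift with lim_{s→−∞} Λ(s) = λ₋, and suppose X₋ is a fixed point of f(·,λ₋) with ρ(D_x f(X₋,λ₋)) < 1. Then for every sufficiently small ε > 0 there exists S > 0 such that for all r, N > 0 with rN > S, there is a unique sequence {x_n}_{n ≤ −N} with ‖x_n − X₋‖ ≤ ε for all n ≤ −N and x_{n+1} = f(x_n, Λ(rn)) for all n < −N. -/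
/-!
The spectral radius of `A = D_x f(X₋, λ₋)` is below `1`, so by Gelfand's formula `‖A ^ k‖ ≤ t ^ k`
for some `t < 1` and `k > 0`. In the adapted norm `max_{i<k} t⁻ⁱ ‖Aⁱ v‖` the map `A` is a
`t`-contraction, hence, by the mean value inequality, so is `f(·, λ)` up to a small error for `x`
near `X₋` and `λ` near `λ₋`, uniformly in a neighbourhood. For `rn` far enough in the past,
`Λ(rn)` is in that neighbourhood and `f(X₋, Λ(rn))` is close to `X₋`, so each step of the
nonautonomous map sends the `ε`-ball of the adapted norm into itself and contracts. A uniformly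
contracting backward recursion has exactly one bounded solution: iterate the recursion from the
constant sequence `X₋` to get it, and compare two solutions `j` steps back for uniqueness.
-/

open Filter Topology Metric Set

theorem exists_pow_norm_lt_one_of_forall_spectrum_lt_one {A : Type*} [NormedRing A]
    [NormedAlgebra ℂ A] [CompleteSpace A] {a : A} (ha : ∀ z ∈ spectrum ℂ a, ‖z‖ < 1) :
    ∃ k > 0, ‖a ^ k‖ < 1 := by
  cases subsingleton_or_nontrivial A with
  | inl _ => exact ⟨1, one_pos, by simp [Subsingleton.elim (a ^ 1) 0]⟩
  | inr _ =>
    have hρ : spectralRadius ℂ a < 1 := by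
      simpa using spectrum.spectralRadius_lt_of_forall_lt a (r := 1)
        fun z hz => mod_cast ha z hz
    obtain ⟨k, hk, hk1⟩ :=
      ((spectrum.pow_nnnorm_pow_one_div_tendsto_nhds_spectralRadius a).eventually_lt_const hρ
        |>.and (eventually_gt_atTop 0)).exists
    refine ⟨k, hk1, ?_⟩
    by_contra! h
    exact hk.not_ge (ENNReal.one_le_rpow (mod_cast h) (by positivity))

theorem exists_lt_one_le_pow {a : ℝ} (ha : a < 1) (k : ℕ) : ∃ t, 0 < t ∧ t < 1 ∧ a ≤ t ^ k := by
  have hpow : Tendsto (· ^ k) (𝓝[<] (1 : ℝ)) (𝓝 1) := by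
    simpa using ((continuous_pow k).tendsto (1 : ℝ)).mono_left nhdsWithin_le_nhds
  obtain ⟨t, ⟨ht0, ht1⟩, hat⟩ :=
    (Filter.Eventually.and (Ioo_mem_nhdsLT one_pos) (hpow.eventually (lt_mem_nhds ha))).exists
  exact ⟨t, ht0, ht1, hat.le⟩

section LinftyNorm

attribute [local instance] Matrix.linftyOpNormedAddCommGroup Matrix.linftyOpNormedRing
  Matrix.linftyOpNormedAlgebra

theorem ContinuousLinearMap.norm_pow_eq_norm_toMatrix'_map_ofReal_pow {n : Type*} [Fintype n]
    [DecidableEq n] (A : (n → ℝ) →L[ℝ] (n → ℝ)) (k : ℕ) :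
    ‖A ^ k‖ = ‖(LinearMap.toMatrix' (A : (n → ℝ) →ₗ[ℝ] (n → ℝ))).map Complex.ofReal ^ k‖ := by
  set M := LinearMap.toMatrix' (A : (n → ℝ) →ₗ[ℝ] (n → ℝ))
  have hpow : LinearMap.toMatrix' ((A ^ k : (n → ℝ) →L[ℝ] (n → ℝ)) : (n → ℝ) →ₗ[ℝ] (n → ℝ)) =
      M ^ k := by
    rw [ContinuousLinearMap.toLinearMap_pow]
    exact map_pow LinearMap.toMatrixAlgEquiv' _ k
  have hmap : (M ^ k).map Complex.ofReal = M.map Complex.ofReal ^ k :=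
    Matrix.map_pow _ Complex.ofRealHom k
  rw [← hmap, ← Matrix.linfty_opNorm_toMatrix, hpow, Matrix.linfty_opNorm_def,
    Matrix.linfty_opNorm_def]
  simp

theorem ContinuousLinearMap.exists_norm_pow_le_pow_of_spectrum {n : Type*} [Fintype n]
    [DecidableEq n] {A : (n → ℝ) →L[ℝ] (n → ℝ)}
    (hA : ∀ μ ∈ spectrum ℂ ((LinearMap.toMatrix' (A : (n → ℝ) →ₗ[ℝ] (n → ℝ))).map
      Complex.ofReal), ‖μ‖ < 1) :
    ∃ t, 0 < t ∧ t < 1 ∧ ∃ k > 0, ‖A ^ k‖ ≤ t ^ k := by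
  obtain ⟨k, hk, hAk⟩ := exists_pow_norm_lt_one_of_forall_spectrum_lt_one hA
  obtain ⟨t, ht0, ht1, hkt⟩ := exists_lt_one_le_pow hAk k
  exact ⟨t, ht0, ht1, k, hk, A.norm_pow_eq_norm_toMatrix'_map_ofReal_pow k ▸ hkt⟩

end LinftyNorm

namespace ContinuousLinearMap

variable {E : Type*} [NormedAddCommGroup E] [NormedSpace ℝ E]

/-- `‖adaptedEmbedding A t k v‖ = max_{i<k} t⁻ⁱ ‖Aⁱ v‖` is the adapted norm of `v`. -/
noncomputable def adaptedEmbedding (A : E →L[ℝ] E) (t : ℝ) (k : ℕ) : E →L[ℝ] (Fin k → E) :=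
  pi fun i => (t ^ (i : ℕ))⁻¹ • A ^ (i : ℕ)

@[simp]
theorem adaptedEmbedding_apply (A : E →L[ℝ] E) (t : ℝ) (k : ℕ) (v : E) (i : Fin k) :
    adaptedEmbedding A t k v i = (t ^ (i : ℕ))⁻¹ • (A ^ (i : ℕ)) v :=
  rfl

theorem norm_le_norm_adaptedEmbedding (A : E →L[ℝ] E) (t : ℝ) {k : ℕ} (hk : 0 < k) (v : E) :
    ‖v‖ ≤ ‖adaptedEmbedding A t k v‖ := by
  simpa using norm_le_pi_norm (adaptedEmbedding A t k v) ⟨0, hk⟩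

theorem norm_adaptedEmbedding_apply_le {A : E →L[ℝ] E} {t : ℝ} {k : ℕ} (ht : 0 < t)
    (hAk : ‖A ^ k‖ ≤ t ^ k) (v : E) :
    ‖adaptedEmbedding A t k (A v)‖ ≤ t * ‖adaptedEmbedding A t k v‖ := by
  refine (pi_norm_le_iff_of_nonneg (by positivity)).2 fun i => ?_
  have hA : (A ^ (i : ℕ)) (A v) = (A ^ ((i : ℕ) + 1)) v := by rw [pow_succ]; rfl
  rw [adaptedEmbedding_apply, hA, norm_smul, norm_inv, norm_pow, Real.norm_of_nonneg ht.le]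
  rcases (show (i : ℕ) + 1 ≤ k from i.isLt).eq_or_lt with hik | hik
  · calc (t ^ (i : ℕ))⁻¹ * ‖(A ^ ((i : ℕ) + 1)) v‖
          ≤ (t ^ (i : ℕ))⁻¹ * (t ^ ((i : ℕ) + 1) * ‖v‖) := by
            gcongr
            rw [hik]
            exact (le_opNorm _ _).trans (by gcongr)
      _ = t * ‖v‖ := by field_simp; ring
      _ ≤ t * ‖adaptedEmbedding A t k v‖ := by
          gcongr; exact norm_le_norm_adaptedEmbedding A t (by omega) v
  · calc (t ^ (i : ℕ))⁻¹ * ‖(A ^ ((i : ℕ) + 1)) v‖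
          = t * ‖adaptedEmbedding A t k v ⟨i + 1, hik⟩‖ := by
            rw [adaptedEmbedding_apply, norm_smul, norm_inv, norm_pow, Real.norm_of_nonneg ht.le]
            field_simp; ring
      _ ≤ t * ‖adaptedEmbedding A t k v‖ := by gcongr; exact norm_le_pi_norm _ _

end ContinuousLinearMap

section LocalContraction

variable {E P F : Type*} [NormedAddCommGroup E] [NormedSpace ℝ E] [NormedAddCommGroup P]
  [NormedSpace ℝ P] [NormedAddCommGroup F] [NormedSpace ℝ F]

theorem Convex.norm_map_image_sub_le_of_norm_hasFDerivWithin_sub_le {L : E →L[ℝ] F}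
    {A : E →L[ℝ] E} {t e : ℝ} {s : Set E} (hs : Convex ℝ s) (hL : ∀ v, ‖v‖ ≤ ‖L v‖)
    (hLA : ∀ v, ‖L (A v)‖ ≤ t * ‖L v‖) {g : E → E} {g' : E → E →L[ℝ] E}
    (hg : ∀ z ∈ s, HasFDerivWithinAt g (g' z) s z)
    (hg' : ∀ z ∈ s, ‖g' z - A‖ ≤ e) {y y' : E} (hy : y ∈ s) (hy' : y' ∈ s) :
    ‖L (g y - g y')‖ ≤ (t + ‖L‖ * e) * ‖L (y - y')‖ := by
  have he : 0 ≤ e := (norm_nonneg _).trans (hg' y hy)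
  have hmvt : ‖L (g y) - L (g y') - (L ∘L A) (y - y')‖ ≤ ‖L‖ * e * ‖y - y'‖ := by
    refine hs.norm_image_sub_le_of_norm_hasFDerivWithin_le'
      (fun z hz => L.hasFDerivAt.comp_hasFDerivWithinAt z (hg z hz)) (fun z hz => ?_) hy' hy
    rw [← ContinuousLinearMap.comp_sub]
    exact (L.opNorm_comp_le _).trans (by gcongr; exact hg' z hz)
  calc ‖L (g y - g y')‖
      ≤ ‖L (A (y - y'))‖ + ‖L (g y) - L (g y') - (L ∘L A) (y - y')‖ := by
        rw [map_sub]; exact norm_le_insert' _ _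
    _ ≤ t * ‖L (y - y')‖ + ‖L‖ * e * ‖L (y - y')‖ := by
        gcongr
        · exact hLA _
        · exact hmvt.trans (by gcongr; exact hL _)
    _ = (t + ‖L‖ * e) * ‖L (y - y')‖ := by ring

variable {f : E × P → E}

theorem ContDiff.hasFDerivAt_comp_prodMk_left (hf : ContDiff ℝ 1 f) (z : E) (w : P) :
    HasFDerivAt (fun x => f (x, w)) ((fderiv ℝ f (z, w)).comp (.inl ℝ E P)) z :=
  (hf.differentiable one_ne_zero (z, w)).hasFDerivAt.comp z
    ((hasFDerivAt_id z).prodMk (hasFDerivAt_const w z))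

theorem ContDiff.exists_closedBall_contracting (hf : ContDiff ℝ 1 f) {x₀ : E} {w₀ : P}
    {L : E →L[ℝ] F} {t q : ℝ} (hL : ∀ v, ‖v‖ ≤ ‖L v‖)
    (hLA : ∀ v, ‖L (fderiv ℝ (fun x => f (x, w₀)) x₀ v)‖ ≤ t * ‖L v‖) (htq : t < q) :
    ∃ R > 0, ∀ᶠ w in 𝓝 w₀, ∀ y ∈ closedBall x₀ R, ∀ y' ∈ closedBall x₀ R,
      ‖L (f (y, w) - f (y', w))‖ ≤ q * ‖L (y - y')‖ := by
  set G : E × P → E →L[ℝ] E := fun p => (fderiv ℝ f p).comp (.inl ℝ E P)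
  have hG : Continuous G := (hf.continuous_fderiv one_ne_zero).clm_comp continuous_const
  have hG₀ : G (x₀, w₀) = fderiv ℝ (fun x => f (x, w₀)) x₀ :=
    (hf.hasFDerivAt_comp_prodMk_left x₀ w₀).fderiv.symm
  set e := (q - t) / (‖L‖ + 1)
  have he : 0 < e := div_pos (by linarith) (by positivity)
  have hLe : ‖L‖ * e ≤ q - t :=
    calc ‖L‖ * e ≤ (‖L‖ + 1) * e := by gcongr; linarith
      _ = q - t := mul_div_cancel₀ _ (by positivity)
  have hnear : ∀ᶠ p in 𝓝 (x₀, w₀), ‖G p - fderiv ℝ (fun x => f (x, w₀)) x₀‖ ≤ e := by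
    filter_upwards [hG.continuousAt.eventually (closedBall_mem_nhds _ he)] with p hp
    rwa [dist_eq_norm, hG₀] at hp
  rw [nhds_prod_eq] at hnear
  obtain ⟨px, hpx, pw, hpw, hG'⟩ := eventually_prod_iff.1 hnear
  obtain ⟨R, hR, hRpx⟩ := nhds_basis_closedBall.mem_iff.1 hpx
  refine ⟨R, hR, hpw.mono fun w hw y hy y' hy' => ?_⟩
  refine ((convex_closedBall x₀ R).norm_map_image_sub_le_of_norm_hasFDerivWithin_sub_le hL hLA
    (fun z _ => (hf.hasFDerivAt_comp_prodMk_left z w).hasFDerivWithinAt)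
    (fun z hz => hG' (hRpx hz) hw) hy hy').trans ?_
  gcongr
  linarith

end LocalContraction

section BackwardOrbit

variable {ι E F : Type*} [MetricSpace E] [PseudoMetricSpace F] {φ : E → F} {σ : ι → ι}
  {g : ι → E → E} {q D : ℝ}

theorem eq_of_backward_orbit_of_contracting (hφ : ∀ y y', dist y y' ≤ dist (φ y) (φ y'))
    (hq0 : 0 ≤ q) (hq : q < 1) {U : Set E} (hD : ∀ y ∈ U, ∀ y' ∈ U, dist (φ y) (φ y') ≤ D)
    (hg : ∀ i, ∀ y ∈ U, ∀ y' ∈ U, dist (φ (g i y)) (φ (g i y')) ≤ q * dist (φ y) (φ y'))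
    {x y : ι → E} (hxU : ∀ i, x i ∈ U) (hyU : ∀ i, y i ∈ U) (hx : ∀ i, x i = g i (x (σ i)))
    (hy : ∀ i, y i = g i (y (σ i))) : x = y := by
  have hdecay : ∀ j : ℕ, ∀ i, dist (φ (x i)) (φ (y i)) ≤ q ^ j * D := by
    intro j
    induction j with
    | zero => simpa using fun i => hD _ (hxU i) _ (hyU i)
    | succ j ih =>
      intro i
      rw [hx, hy, pow_succ', mul_assoc]
      exact (hg i _ (hxU _) _ (hyU _)).trans (by gcongr; exact ih _)
  have hlim : Tendsto (fun j : ℕ => q ^ j * D) atTop (𝓝 0) := by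
    simpa using (tendsto_pow_atTop_nhds_zero_of_lt_one hq0 hq).mul_const D
  funext i
  exact dist_le_zero.1 ((hφ _ _).trans (ge_of_tendsto' hlim fun j => hdecay j i))

theorem exists_backward_orbit_of_contracting [CompleteSpace E]
    (hφ : ∀ y y', dist y y' ≤ dist (φ y) (φ y')) (hq0 : 0 ≤ q) (hq : q < 1) {K : Set E}
    (hK : IsClosed K) {x₀ : E} (hx₀ : x₀ ∈ K) (hD : ∀ y ∈ K, ∀ y' ∈ K, dist (φ y) (φ y') ≤ D)
    (hgc : ∀ i, Continuous (g i)) (hgK : ∀ i, MapsTo (g i) K K)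
    (hg : ∀ i, ∀ y ∈ K, ∀ y' ∈ K, dist (φ (g i y)) (φ (g i y')) ≤ q * dist (φ y) (φ y')) :
    ∃ x : ι → E, (∀ i, x i ∈ K) ∧ ∀ i, x i = g i (x (σ i)) := by
  let X : ℕ → ι → E := fun j => (fun x i => g i (x (σ i)))^[j] fun _ => x₀
  have hX : ∀ j i, X (j + 1) i = g i (X j (σ i)) := fun j i => by
    simp only [X, Function.iterate_succ_apply']
  have hXK : ∀ j i, X j i ∈ K := by
    intro j
    induction j with
    | zero => exact fun _ => hx₀
    | succ j ih => exact fun i => hX j i ▸ hgK i (ih _)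
  have hstep : ∀ j i, dist (X j i) (X (j + 1) i) ≤ D * q ^ j := by
    suffices ∀ j i, dist (φ (X j i)) (φ (X (j + 1) i)) ≤ D * q ^ j from
      fun j i => (hφ _ _).trans (this j i)
    intro j
    induction j with
    | zero => simpa using fun i => hD _ (hXK 0 i) _ (hXK 1 i)
    | succ j ih =>
      intro i
      calc dist (φ (X (j + 1) i)) (φ (X (j + 2) i))
          = dist (φ (g i (X j (σ i)))) (φ (g i (X (j + 1) (σ i)))) := by
            rw [hX j i, hX (j + 1) i]
        _ ≤ q * (D * q ^ j) := (hg i _ (hXK _ _) _ (hXK _ _)).trans (by gcongr; exact ih _)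
        _ = D * q ^ (j + 1) := by ring
  choose x hx using fun i => cauchySeq_tendsto_of_complete
    (cauchySeq_of_le_geometric q D hq fun j => hstep j i)
  refine ⟨x, fun i => hK.mem_of_tendsto (hx i) (Eventually.of_forall (hXK · i)), fun i => ?_⟩
  refine tendsto_nhds_unique ((hx i).comp (tendsto_add_atTop_nat 1)) ?_
  simpa only [Function.comp_def, hX] using ((hgc i).tendsto _).comp (hx (σ i))

end BackwardOrbit

theorem existsUnique_backward_orbit_of_contracting_closedBall {ι E F : Type*}
    [NormedAddCommGroup E] [NormedSpace ℝ E] [CompleteSpace E] [NormedAddCommGroup F]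
    [NormedSpace ℝ F] {L : E →L[ℝ] F} (hL : ∀ v, ‖v‖ ≤ ‖L v‖) {x₀ : E} {q ε : ℝ} (hq0 : 0 ≤ q)
    (hq : q < 1) (hε : 0 ≤ ε) (σ : ι → ι) {g : ι → E → E} (hgc : ∀ i, Continuous (g i))
    (hg : ∀ i, ∀ y ∈ closedBall x₀ ε, ∀ y' ∈ closedBall x₀ ε,
      ‖L (g i y - g i y')‖ ≤ q * ‖L (y - y')‖)
    (hdrift : ∀ i, ‖L (g i x₀ - x₀)‖ ≤ (1 - q) * ε) :
    ∃! x : ι → E, (∀ i, ‖x i - x₀‖ ≤ ε) ∧ ∀ i, x i = g i (x (σ i)) := by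
  have hφ : ∀ y y', dist y y' ≤ dist (L y) (L y') := fun y y' => by
    simpa only [dist_eq_norm, map_sub] using hL (y - y')
  have hgφ : ∀ i, ∀ y ∈ closedBall x₀ ε, ∀ y' ∈ closedBall x₀ ε,
      dist (L (g i y)) (L (g i y')) ≤ q * dist (L y) (L y') := by
    simpa only [dist_eq_norm, map_sub] using hg
  have hD : ∀ y ∈ closedBall x₀ ε, ∀ y' ∈ closedBall x₀ ε, dist (L y) (L y') ≤ ‖L‖ * (2 * ε) :=
    fun y hy y' hy' => (L.dist_le_opNorm y y').trans <| by
      gcongr; linarith [dist_triangle_right y y' x₀, mem_closedBall.1 hy, mem_closedBall.1 hy']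
  -- the orbit is built inside the ball of the adapted norm, which the `g i` map into itself
  set K := {y | ‖L (y - x₀)‖ ≤ ε}
  have hKball : K ⊆ closedBall x₀ ε := fun y hy =>
    mem_closedBall_iff_norm.2 ((hL _).trans hy)
  have hKclosed : IsClosed K :=
    isClosed_le (L.continuous.comp (continuous_sub_right x₀)).norm continuous_const
  have hgK : ∀ i, MapsTo (g i) K K := fun i y hy => by
    have hx₀ : x₀ ∈ closedBall x₀ ε := mem_closedBall_self hε
    calc ‖L (g i y - x₀)‖ = ‖L (g i y - g i x₀) + L (g i x₀ - x₀)‖ := by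
          rw [← map_add, sub_add_sub_cancel]
      _ ≤ ‖L (g i y - g i x₀)‖ + ‖L (g i x₀ - x₀)‖ := norm_add_le _ _
      _ ≤ q * ‖L (y - x₀)‖ + (1 - q) * ε := add_le_add (hg i y (hKball hy) x₀ hx₀) (hdrift i)
      _ ≤ ε := by nlinarith [show ‖L (y - x₀)‖ ≤ ε from hy]
  have hx₀K : x₀ ∈ K := by simpa [K] using hε
  obtain ⟨x, hxK, hx⟩ := exists_backward_orbit_of_contracting hφ hq0 hq hKclosed hx₀K
    (fun y hy y' hy' => hD y (hKball hy) y' (hKball hy')) hgc hgK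
    (fun i y hy y' hy' => hgφ i y (hKball hy) y' (hKball hy'))
  refine ⟨x, ⟨fun i => mem_closedBall_iff_norm.1 (hKball (hxK i)), hx⟩, ?_⟩
  rintro y ⟨hy, hyx⟩
  exact eq_of_backward_orbit_of_contracting hφ hq0 hq hD hgφ
    (fun i => mem_closedBall_iff_norm.2 (hy i)) (fun i => hKball (hxK i)) hyx hx

theorem Int.forall_succ_eq_iff_forall_eq_pred {E : Type*} {N : ℤ} (F : ℤ → E → E)
    (x : {n : ℤ // n ≤ N} → E) :
    (∀ n (h : n + 1 ≤ N), x ⟨n + 1, h⟩ = F n (x ⟨n, by omega⟩)) ↔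
      ∀ i : {n : ℤ // n ≤ N}, x i = F (i - 1) (x ⟨i - 1, by have := i.2; omega⟩) := by
  refine ⟨fun h i => ?_, fun h n hn => ?_⟩
  · simpa using h (i - 1) (by simpa using i.2)
  · simpa using h ⟨n + 1, hn⟩

/-- Lemma epsilonNeigh: for every sufficiently small `ε > 0` there is
`S > 0` such that whenever `r * N > S`, there is a unique backward solution
`{x_n}_{n ≤ -N}` of `x_{n+1} = f(x_n, Λ(r n))` staying within `ε` of `X₋`. -/
theorem stmt3 (ℓ m : ℕ)
    (f : (Fin ℓ → ℝ) × (Fin m → ℝ) → (Fin ℓ → ℝ)) (hf : ContDiff ℝ 1 f)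
    (Λ : ℝ → (Fin m → ℝ)) (lamm : Fin m → ℝ)
    (hΛlim : Tendsto Λ atBot (nhds lamm))
    (Xm : Fin ℓ → ℝ) (hfix : f (Xm, lamm) = Xm)
    (hspec : ∀ μ ∈ spectrum ℂ
        ((LinearMap.toMatrix' ((fderiv ℝ (fun x => f (x, lamm)) Xm :
            (Fin ℓ → ℝ) →L[ℝ] (Fin ℓ → ℝ)) : (Fin ℓ → ℝ) →ₗ[ℝ] (Fin ℓ → ℝ))).map
          Complex.ofReal), ‖μ‖ < 1) :
    ∃ ε₀ > (0:ℝ), ∀ ε : ℝ, 0 < ε → ε ≤ ε₀ →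
      ∃ S > (0:ℝ), ∀ r : ℝ, 0 < r → ∀ N : ℕ, S < r * N →
        ∃! x : {n : ℤ // n ≤ -(N:ℤ)} → (Fin ℓ → ℝ),
          (∀ n : {n : ℤ // n ≤ -(N:ℤ)}, ‖x n - Xm‖ ≤ ε) ∧
          (∀ n : ℤ, ∀ h : n + 1 ≤ -(N:ℤ),
            x ⟨n + 1, h⟩ = f (x ⟨n, by omega⟩, Λ (r * n))) := by
  set A := fderiv ℝ (fun x => f (x, lamm)) Xm
  obtain ⟨t, ht0, ht1, k, hk, hAk⟩ := A.exists_norm_pow_le_pow_of_spectrum hspec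
  set L := A.adaptedEmbedding t k
  have hL : ∀ v, ‖v‖ ≤ ‖L v‖ := A.norm_le_norm_adaptedEmbedding t hk
  obtain ⟨q, htq, hq1⟩ := exists_between ht1
  obtain ⟨R, hR, hcontr⟩ :=
    hf.exists_closedBall_contracting hL (A.norm_adaptedEmbedding_apply_le ht0 hAk) htq
  refine ⟨R, hR, fun ε hε hεR => ?_⟩
  have hdrift : ∀ᶠ w in 𝓝 lamm, ‖L (f (Xm, w) - Xm)‖ < (1 - q) * ε := by
    refine ContinuousAt.eventually_lt (L.continuous.comp ((hf.continuous.comp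
      (continuous_const.prodMk continuous_id)).sub continuous_const)).norm.continuousAt
      continuousAt_const ?_
    simp only [hfix, sub_self, map_zero, norm_zero]
    exact mul_pos (by linarith) hε
  obtain ⟨s₀, hs₀⟩ := eventually_atBot.1 (hΛlim.eventually (hcontr.and hdrift))
  refine ⟨max 1 (-s₀), lt_max_of_lt_left one_pos, fun r hr N hN => ?_⟩
  have hs : ∀ i : {n : ℤ // n ≤ -(N : ℤ)}, r * ((i - 1 : ℤ) : ℝ) ≤ s₀ := fun i => by
    have hi : ((i - 1 : ℤ) : ℝ) ≤ -N := by exact_mod_cast (show (i : ℤ) - 1 ≤ -N by omega)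
    nlinarith [le_max_right 1 (-s₀)]
  have hball : closedBall Xm ε ⊆ closedBall Xm R := closedBall_subset_closedBall hεR
  rw [existsUnique_congr fun x => and_congr_right'
    (Int.forall_succ_eq_iff_forall_eq_pred (fun n y => f (y, Λ (r * n))) x)]
  exact existsUnique_backward_orbit_of_contracting_closedBall hL (by linarith) hq1 hε.le
    (fun i => ⟨i - 1, by omega⟩)
    (fun i => hf.continuous.comp (continuous_id.prodMk continuous_const))
    (fun i y hy y' hy' => (hs₀ _ (hs i)).1 y (hball hy) y' (hball hy'))
    (fun i => (hs₀ _ (hs i)).2.le)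
end

section
/- Let s ↦ A(s) be a continuous map from the extended real line [−∞,∞] into ℓ×ℓ real matrices such that ρ(A(s)) < c for all s, where c ∈ (0,1). Then there exists κ > 0 such that ‖A(s)^n‖ < κ c^n for every s ∈ ℝ and every n ∈ ℕ. -/
/-!
Each matrix `M` in the compact set `{Ap, Am} ∪ A(ℝ)` has, by Gelfand's formula, a power `N` with
`‖M ^ N‖ < c ^ N`, and this strict inequality persists on a neighbourhood of `M`. Finitely many
such neighbourhoods cover the set, so a single bound `N ≤ K` on the exponents and a bound
`‖M‖ ≤ B c` give `‖M ^ n‖ ≤ B ^ K c ^ n` by splitting off factors `M ^ N`.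
-/

open Filter Topology Set

theorem isCompact_insert_insert_range_of_tendsto {X : Type*} [TopologicalSpace X] {f : ℝ → X}
    (hf : Continuous f) {a b : X} (ha : Tendsto f atTop (𝓝 a)) (hb : Tendsto f atBot (𝓝 b)) :
    IsCompact (insert a (insert b (range f))) := by
  -- `range f` is the union of the ranges of `t ↦ f |t|` and `t ↦ f (-|t|)`, which converge
  -- along `cocompact ℝ` to `a` and `b` respectively.
  have habs : Tendsto (fun t : ℝ => |t|) (cocompact ℝ) atTop := by
    rw [cocompact_eq_atBot_atTop]
    exact tendsto_abs_atBot_atTop.sup tendsto_abs_atTop_atTop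
  have hpos := (ha.comp habs).isCompact_insert_range_of_cocompact (hf.comp continuous_abs)
  have hneg := (hb.comp (tendsto_neg_atTop_atBot.comp habs)).isCompact_insert_range_of_cocompact
    (hf.comp continuous_abs.neg)
  convert hpos.union hneg using 1
  ext x
  simp only [mem_insert_iff, mem_union, mem_range, Function.comp_apply]
  constructor
  · rintro (rfl | rfl | ⟨s, rfl⟩)
    · exact Or.inl (Or.inl rfl)
    · exact Or.inr (Or.inl rfl)
    · rcases le_total 0 s with hs | hs
      · exact Or.inl (Or.inr ⟨s, by rw [abs_of_nonneg hs]⟩)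
      · exact Or.inr (Or.inr ⟨s, by rw [abs_of_nonpos hs, neg_neg]⟩)
  · rintro ((rfl | ⟨s, rfl⟩) | (rfl | ⟨s, rfl⟩)) <;> simp

theorem norm_pow_le_of_norm_pow_le {R : Type*} [NormedRing R] (h1 : ‖(1 : R)‖ ≤ 1) {g : R}
    {c B : ℝ} (hc : 0 < c) (hB : 1 ≤ B) (hg : ‖g‖ ≤ B * c) {N K : ℕ} (hN : 0 < N) (hNK : N ≤ K)
    (hgN : ‖g ^ N‖ ≤ c ^ N) (n : ℕ) : ‖g ^ n‖ ≤ B ^ K * c ^ n := by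
  induction n using Nat.strong_induction_on with
  | _ n ih =>
    rcases lt_or_ge n N with hn | hn
    · have hpow : ‖g ^ n‖ ≤ ‖g‖ ^ n := by
        rcases n.eq_zero_or_pos with rfl | hn0
        · simpa using h1
        · exact norm_pow_le' g hn0
      calc ‖g ^ n‖ ≤ (B * c) ^ n := hpow.trans (pow_le_pow_left₀ (norm_nonneg g) hg n)
        _ = B ^ n * c ^ n := mul_pow B c n
        _ ≤ B ^ K * c ^ n := by gcongr; exact hn.le.trans hNK
    · obtain ⟨m, rfl⟩ := Nat.exists_eq_add_of_le hn
      calc ‖g ^ (N + m)‖ ≤ ‖g ^ N‖ * ‖g ^ m‖ := by rw [pow_add]; exact norm_mul_le _ _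
        _ ≤ c ^ N * (B ^ K * c ^ m) := by
          gcongr
          exact ih m (by omega)
        _ = B ^ K * c ^ (N + m) := by ring

theorem IsCompact.exists_norm_pow_le {R : Type*} [NormedRing R] (h1 : ‖(1 : R)‖ ≤ 1)
    {K : Set R} (hK : IsCompact K) {c : ℝ} (hc : 0 < c)
    (h : ∀ a ∈ K, ∃ N, 0 < N ∧ ‖a ^ N‖ < c ^ N) :
    ∃ κ > 0, ∀ a ∈ K, ∀ n, ‖a ^ n‖ ≤ κ * c ^ n := by
  choose! N hN0 hN using h
  have hU : ∀ a ∈ K, {b : R | ‖b ^ N a‖ < c ^ N a} ∈ 𝓝 a := fun a ha =>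
    (isOpen_lt (continuous_pow _).norm continuous_const).mem_nhds (hN a ha)
  obtain ⟨t, htK, hKt⟩ := hK.elim_nhds_subcover _ hU
  obtain ⟨M, hM⟩ := isBounded_iff_forall_norm_le.mp hK.isBounded
  set B := max 1 (M / c)
  have hB : 1 ≤ B := le_max_left _ _
  have hnorm : ∀ a ∈ K, ‖a‖ ≤ B * c := fun a ha =>
    (hM a ha).trans <| (div_le_iff₀ hc).mp (le_max_right _ _)
  refine ⟨B ^ t.sup N, by positivity, fun a ha n => ?_⟩
  obtain ⟨b, hbt, hab⟩ := mem_iUnion₂.mp (hKt ha)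
  exact norm_pow_le_of_norm_pow_le h1 hc hB (hnorm a ha) (hN0 b (htK b hbt))
    (Finset.le_sup hbt) (le_of_lt hab) n

theorem eventually_norm_pow_lt_of_forall_spectrum_lt {A : Type*} [NormedRing A]
    [NormedAlgebra ℂ A] [CompleteSpace A] (a : A) {c : ℝ} (hc : 0 < c)
    (h : ∀ z ∈ spectrum ℂ a, ‖z‖ < c) : ∀ᶠ n in atTop, ‖a ^ n‖ < c ^ n := by
  rcases subsingleton_or_nontrivial A with hA | hA
  · exact Eventually.of_forall fun n => by simpa [Subsingleton.elim (a ^ n) 0] using pow_pos hc n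
  have hρ : spectralRadius ℂ a < ENNReal.ofReal c := by
    refine spectrum.spectralRadius_lt_of_forall_lt a fun z hz => ?_
    rw [Real.lt_toNNReal_iff_coe_lt, coe_nnnorm]
    exact h z hz
  have hgelfand := spectrum.pow_norm_pow_one_div_tendsto_nhds_spectralRadius a
  filter_upwards [hgelfand.eventually_lt_const hρ, eventually_gt_atTop 0] with n hn hn0
  rw [ENNReal.ofReal_lt_ofReal_iff hc, one_div] at hn
  calc ‖a ^ n‖ = (‖a ^ n‖ ^ ((n : ℝ)⁻¹)) ^ n :=
        (Real.rpow_inv_natCast_pow (norm_nonneg _) hn0.ne').symm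
    _ < c ^ n := pow_lt_pow_left₀ hn (by positivity) hn0.ne'

namespace Matrix

variable {n : Type*} [Fintype n] [DecidableEq n]

theorem norm_toEuclideanCLM_le_norm_map_ofReal (M : Matrix n n ℝ) :
    ‖toEuclideanCLM (𝕜 := ℝ) M‖ ≤ ‖toEuclideanCLM (𝕜 := ℂ) (M.map Complex.ofReal)‖ := by
  refine ContinuousLinearMap.opNorm_le_bound _ (norm_nonneg _) fun v => ?_
  have hcomplexify : ∀ w : EuclideanSpace ℝ n,
      ‖(WithLp.toLp 2 (Complex.ofReal ∘ w.ofLp) : EuclideanSpace ℂ n)‖ = ‖w‖ := fun w => by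
    simp [EuclideanSpace.norm_eq]
  have hmap :
      toEuclideanCLM (𝕜 := ℂ) (M.map Complex.ofReal) (WithLp.toLp 2 (Complex.ofReal ∘ v.ofLp))
        = WithLp.toLp 2 (Complex.ofReal ∘ (toEuclideanCLM (𝕜 := ℝ) M v).ofLp) := by
    ext i
    exact (RingHom.map_mulVec Complex.ofRealHom M v.ofLp i).symm
  rw [← hcomplexify, ← hmap, ← hcomplexify v]
  exact ContinuousLinearMap.le_opNorm _ _

theorem continuous_toEuclideanCLM :
    Continuous (toEuclideanCLM (n := n) (𝕜 := ℝ)) :=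
  (toEuclideanCLM (n := n) (𝕜 := ℝ)).toAlgEquiv.toLinearMap.continuous_of_finiteDimensional

theorem eventually_norm_toEuclideanCLM_pow_lt (M : Matrix n n ℝ) {c : ℝ} (hc : 0 < c)
    (h : ∀ μ ∈ spectrum ℂ (M.map Complex.ofReal), ‖μ‖ < c) :
    ∀ᶠ N in atTop, ‖toEuclideanCLM (𝕜 := ℝ) M ^ N‖ < c ^ N := by
  have hspec : ∀ z ∈ spectrum ℂ (toEuclideanCLM (𝕜 := ℂ) (M.map Complex.ofReal)), ‖z‖ < c := by
    rwa [AlgEquiv.spectrum_eq]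
  filter_upwards [eventually_norm_pow_lt_of_forall_spectrum_lt _ hc hspec] with N hN
  calc ‖toEuclideanCLM (𝕜 := ℝ) M ^ N‖ = ‖toEuclideanCLM (𝕜 := ℝ) (M ^ N)‖ := by rw [map_pow]
    _ ≤ ‖toEuclideanCLM (𝕜 := ℂ) ((M ^ N).map Complex.ofReal)‖ :=
      norm_toEuclideanCLM_le_norm_map_ofReal _
    _ = ‖toEuclideanCLM (𝕜 := ℂ) (M.map Complex.ofReal) ^ N‖ := by
      have hcomm : (M ^ N).map Complex.ofReal = M.map Complex.ofReal ^ N :=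
        map_pow Complex.ofRealHom.mapMatrix M N
      rw [hcomm, map_pow]
    _ < c ^ N := hN

end Matrix

theorem stmt7_general (ℓ : ℕ) (A : ℝ → Matrix (Fin ℓ) (Fin ℓ) ℝ) (hA : Continuous A)
    (Ap Am : Matrix (Fin ℓ) (Fin ℓ) ℝ)
    (hAp : Tendsto A atTop (nhds Ap)) (hAm : Tendsto A atBot (nhds Am))
    (c : ℝ) (hc0 : 0 < c)
    (hspec : ∀ s : ℝ, ∀ μ ∈ spectrum ℂ ((A s).map Complex.ofReal), ‖μ‖ < c)
    (hspecp : ∀ μ ∈ spectrum ℂ (Ap.map Complex.ofReal), ‖μ‖ < c)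
    (hspecm : ∀ μ ∈ spectrum ℂ (Am.map Complex.ofReal), ‖μ‖ < c) :
    ∃ κ > (0:ℝ), ∀ (s : ℝ) (n : ℕ),
      ‖(Matrix.toEuclideanCLM (𝕜 := ℝ) (A s)) ^ n‖ < κ * c ^ n := by
  set K := insert Ap (insert Am (range A))
  have hK : IsCompact (Matrix.toEuclideanCLM (𝕜 := ℝ) '' K) :=
    (isCompact_insert_insert_range_of_tendsto hA hAp hAm).image Matrix.continuous_toEuclideanCLM
  have hspecK : ∀ M ∈ K, ∀ μ ∈ spectrum ℂ (M.map Complex.ofReal), ‖μ‖ < c := by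
    rintro M (rfl | rfl | ⟨s, rfl⟩)
    exacts [hspecp, hspecm, hspec s]
  obtain ⟨κ, hκ, hbound⟩ := hK.exists_norm_pow_le ContinuousLinearMap.norm_id_le hc0 <| by
    rintro _ ⟨M, hM, rfl⟩
    exact ((Matrix.eventually_norm_toEuclideanCLM_pow_lt M hc0 (hspecK M hM)).and
      (eventually_gt_atTop 0)).exists.imp fun N hN => ⟨hN.2, hN.1⟩
  refine ⟨2 * κ, by positivity, fun s n => ?_⟩
  have hAs : A s ∈ K := mem_insert_of_mem _ (mem_insert_of_mem _ (mem_range_self s))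
  calc ‖Matrix.toEuclideanCLM (𝕜 := ℝ) (A s) ^ n‖ ≤ κ * c ^ n :=
        hbound _ (mem_image_of_mem _ hAs) n
    _ < 2 * κ * c ^ n := by gcongr; linarith

/-- Uniformity Lemma: if `s ↦ A(s)` is continuous on the extended real
line (i.e. continuous on `ℝ` with matrix limits `A₋, A₊` at `∓∞`) and every value has
all complex eigenvalues of modulus `< c` (with `c ∈ (0,1)`), then there is `κ > 0`
with `‖A(s)^n‖ < κ cⁿ` (Euclidean operator norm) for all `s ∈ ℝ`, `n ∈ ℕ`. -/
theorem stmt7 (ℓ : ℕ) (A : ℝ → Matrix (Fin ℓ) (Fin ℓ) ℝ) (hA : Continuous A)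
    (Ap Am : Matrix (Fin ℓ) (Fin ℓ) ℝ)
    (hAp : Tendsto A atTop (nhds Ap)) (hAm : Tendsto A atBot (nhds Am))
    (c : ℝ) (hc0 : 0 < c) (hc1 : c < 1)
    (hspec : ∀ s : ℝ, ∀ μ ∈ spectrum ℂ ((A s).map Complex.ofReal), ‖μ‖ < c)
    (hspecp : ∀ μ ∈ spectrum ℂ (Ap.map Complex.ofReal), ‖μ‖ < c)
    (hspecm : ∀ μ ∈ spectrum ℂ (Am.map Complex.ofReal), ‖μ‖ < c) :
    ∃ κ > (0:ℝ), ∀ (s : ℝ) (n : ℕ),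
      ‖(Matrix.toEuclideanCLM (𝕜 := ℝ) (A s)) ^ n‖ < κ * c ^ n :=
  stmt7_general ℓ A hA Ap Am hAp hAm c hc0 hspec hspecp hspecm
end

section
/- Suppose for every ε > 0 there exists r₀ > 0 such that for all r ∈ (0, r₀) the pullback attractor {x_n^r} satisfies ‖x_n^r − X(rn)‖ < ε for all n ∈ ℤ (ε-tracking), and suppose X₊ = lim_{s→∞} X(s) is an attracting fixed point of f(·,λ₊) whose basin of attraction 𝔅 contains a closed ball B̄_ε(X₊), and suppose (Lemma compactK) for every compact K ⊂ 𝔅 there is S > 0 such that any solution with x_N ∈ K and rN ≥ S converges to X₊. Then there exists r₀ > 0 such that for all r ∈ (0, r₀), lim_{n→∞} x_n^r = X₊ (endpoint tracking). -/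
open Filter

/-- Theorem endpointTracks: if the pullback attractor `{xₙʳ}` ε-tracks
the stable path `(s, X(s))` for all small `r`, `X₊ = lim_{s→∞} X(s)` is an attracting
fixed point of `f(·,λ₊)` whose basin `𝔅` contains a closed ball around `X₊`, and
(Lemma compactK) solutions entering a compact subset of `𝔅` at sufficiently late time
converge to `X₊`, then for all sufficiently small `r > 0`, `xₙʳ → X₊` as `n → ∞`. -/
theorem stmt12 (ℓ m : ℕ)
    (f : (Fin ℓ → ℝ) × (Fin m → ℝ) → (Fin ℓ → ℝ))
    (Λ : ℝ → (Fin m → ℝ)) (lamp : Fin m → ℝ)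
    (X : ℝ → (Fin ℓ → ℝ)) (Xp : Fin ℓ → ℝ)
    (hXp : Tendsto X atTop (nhds Xp)) (hfixp : f (Xp, lamp) = Xp)
    (B : Set (Fin ℓ → ℝ)) (ε₀ : ℝ) (hε₀ : 0 < ε₀)
    (hball : Metric.closedBall Xp ε₀ ⊆ B)
    (x : ℝ → ℤ → (Fin ℓ → ℝ))
    (hsol : ∀ r : ℝ, 0 < r → ∀ n : ℤ, x r (n + 1) = f (x r n, Λ (r * n)))
    -- ε-tracking (Corollary 3.9):
    (htrack : ∀ ε : ℝ, 0 < ε → ∃ r₀ > (0:ℝ), ∀ r : ℝ, 0 < r → r < r₀ →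
      ∀ n : ℤ, ‖x r n - X (r * n)‖ < ε)
    -- Lemma compactK:
    (hcompactK : ∀ K : Set (Fin ℓ → ℝ), IsCompact K → K ⊆ B →
      ∃ S > (0:ℝ), ∀ r : ℝ, 0 < r → ∀ y : ℤ → (Fin ℓ → ℝ),
        (∀ n : ℤ, y (n + 1) = f (y n, Λ (r * n))) →
        ∀ N : ℤ, y N ∈ K → S ≤ r * N → Tendsto y atTop (nhds Xp)) :
    ∃ r₀ > (0:ℝ), ∀ r : ℝ, 0 < r → r < r₀ → Tendsto (x r) atTop (nhds Xp) := by
  obtain ⟨S, hS, hK⟩ := hcompactK (Metric.closedBall Xp ε₀)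
    (isCompact_closedBall _ _) hball
  obtain ⟨r₀, hr₀, htr⟩ := htrack (ε₀/2) (by linarith)
  -- X s close to Xp for large s
  have hX : ∀ᶠ s in atTop, dist (X s) Xp < ε₀/2 :=
    hXp (Metric.ball_mem_nhds _ (by linarith))
  obtain ⟨S₁, hS₁⟩ := eventually_atTop.mp hX
  refine ⟨r₀, hr₀, fun r hr hrr => ?_⟩
  set T := max S S₁
  obtain ⟨N, hN⟩ : ∃ N : ℤ, T / r ≤ (N : ℝ) := exists_int_ge _
  have hrN : T ≤ r * N := by
    rw [div_le_iff₀ hr] at hN; linarith [hN]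
  refine hK r hr (x r) (hsol r hr) N ?_ (le_trans (le_max_left _ _) hrN)
  have h1 : ‖x r N - X (r * N)‖ < ε₀/2 := htr r hr hrr N
  have h2 : dist (X (r * N)) Xp < ε₀/2 :=
    hS₁ _ (le_trans (le_max_right _ _) hrN)
  have h3 := dist_triangle (x r N) (X (r * N)) Xp
  rw [Metric.mem_closedBall]
  simp only [dist_eq_norm] at h2 h3 ⊢
  linarith
end

section
/- Suppose (s, X(s)) is a forward inflowing stable path, i.e. there are compact sets K(s) ⊂ ℝ^ℓ with: (1) K(s₁) ⊆ K(s₂) when s₁ < s₂; (2) f(K(s), Λ(s)) ⊆ K(s) for all s; (3) X₋ ∈ Int K₋ and X₊ ∈ Int K₊ where K₋ = ⋂_s K(s), K₊ = closure(⋃_s K(s)); (4) K₊ is compact and contained in the basin of attraction of X₊ for f(·,λ₊). Then for every r > 0 the pullback attractor {x_n^r} to X₋ satisfies lim_{n→∞} x_n^r = X₊; i.e., there is no R-tipping away from X₋. -/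
open Filter

/-- Theorem inflowing: a forward inflowing stable path admits no
R-tipping: for every `r > 0`, the pullback attractor `{xₙʳ}` to `X₋` converges to
`X₊` as `n → ∞`. -/
theorem stmt13 (ℓ m : ℕ)
    (f : (Fin ℓ → ℝ) × (Fin m → ℝ) → (Fin ℓ → ℝ)) (hf : ContDiff ℝ 1 f)
    (Λ : ℝ → (Fin m → ℝ)) (hΛ : ContDiff ℝ 1 Λ) (lamp : Fin m → ℝ)
    (hΛp : Tendsto Λ atTop (nhds lamp))
    (Xm Xp : Fin ℓ → ℝ) (hfixp : f (Xp, lamp) = Xp)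
    -- the basin of attraction of X₊ for f(·,λ₊), with Lemma compactK:
    (B : Set (Fin ℓ → ℝ))
    (hcompactK : ∀ C : Set (Fin ℓ → ℝ), IsCompact C → C ⊆ B →
      ∃ S > (0:ℝ), ∀ r : ℝ, 0 < r → ∀ y : ℤ → (Fin ℓ → ℝ),
        (∀ n : ℤ, y (n + 1) = f (y n, Λ (r * n))) →
        ∀ N : ℤ, y N ∈ C → S ≤ r * N → Tendsto y atTop (nhds Xp))
    -- forward inflowing stability:
    (K : ℝ → Set (Fin ℓ → ℝ)) (hKcpt : ∀ s, IsCompact (K s))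
    (hmono : ∀ s₁ s₂ : ℝ, s₁ < s₂ → K s₁ ⊆ K s₂)
    (hinv : ∀ s : ℝ, ∀ z ∈ K s, f (z, Λ s) ∈ K s)
    (hXm : Xm ∈ interior (⋂ s : ℝ, K s))
    (hXp : Xp ∈ interior (closure (⋃ s : ℝ, K s)))
    (hKpcpt : IsCompact (closure (⋃ s : ℝ, K s)))
    (hKpB : closure (⋃ s : ℝ, K s) ⊆ B)
    -- the pullback attractor to X₋:
    (x : ℝ → ℤ → (Fin ℓ → ℝ))
    (hsol : ∀ r : ℝ, 0 < r → ∀ n : ℤ, x r (n + 1) = f (x r n, Λ (r * n)))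
    (hpull : ∀ r : ℝ, 0 < r → ∀ ε : ℝ, 0 < ε →
      ∃ N : ℤ, ∀ n : ℤ, n ≤ N → ‖x r n - Xm‖ < ε) :
    ∀ r : ℝ, 0 < r → Tendsto (x r) atTop (nhds Xp) := by
  intro r hr
  obtain ⟨S, hS, hmain⟩ := hcompactK (closure (⋃ s : ℝ, K s)) hKpcpt hKpB
  obtain ⟨ε, hε, hball⟩ := Metric.mem_nhds_iff.mp (interior_mem_nhds.mpr
    (mem_interior_iff_mem_nhds.mp hXm))
  obtain ⟨N₀, hN₀⟩ := hpull r hr ε hε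
  -- x r N₀ ∈ ⋂ K s
  have hbase : x r N₀ ∈ ⋂ s : ℝ, K s := by
    refine interior_subset (hball ?_)
    rw [Metric.mem_ball, dist_eq_norm]
    exact hN₀ N₀ le_rfl
  -- for n ≥ N₀, x r n ∈ K (r * n)
  have hK : ∀ n : ℤ, N₀ ≤ n → x r n ∈ K (r * n) := by
    refine Int.le_induction (Set.mem_iInter.mp hbase _) ?_
    intro n hn ih
    have h1 : f (x r n, Λ (r * n)) ∈ K (r * n) := hinv _ _ ih
    have h2 : K (r * n) ⊆ K (r * ((n : ℤ) + 1 : ℤ)) := by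
      apply hmono
      push_cast
      nlinarith
    rw [hsol r hr n]
    exact h2 h1
  -- pick a late time
  set N : ℤ := max N₀ ⌈S / r⌉ with hN
  have hNN₀ : N₀ ≤ N := le_max_left _ _
  have hmem : x r N ∈ closure (⋃ s : ℝ, K s) :=
    subset_closure (Set.mem_iUnion.mpr ⟨r * N, hK N hNN₀⟩)
  have hSN : S ≤ r * N := by
    have h1 : (⌈S / r⌉ : ℝ) ≤ (N : ℝ) := by exact_mod_cast le_max_right N₀ ⌈S / r⌉
    have h2 : S / r ≤ (N : ℝ) := le_trans (Int.le_ceil _) h1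
    calc S = r * (S / r) := by field_simp
    _ ≤ r * N := by nlinarith
  exact hmain r hr (x r) (hsol r hr) N hmem hSN
end
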